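/- arXiv:2410.07040 — 2 statements merged into one kernel-verified Lean document; each statement's English description precedes it below -/
import Mathlib

section
/- A finitely generated module M over the polynomial ring R[X] (with R a field) is a torsion module if and only if M is finite-dimensional as an R-vector space. -/
/-!
If `M` is torsion, the product of annihilators of finitely many generators is a nonzero
polynomial `p` killing `M`, so `M` is a finitely generated module over `R[X] ⧸ (p)`, which is
finite-dimensional over `R`. Conversely, if `M` is finite-dimensional, then for each `m` the
`R`-linear map `q ↦ q • m` from the infinite-dimensional space `R[X]` cannot be injective.
-/

open Polynomial

theorem Module.isTorsion_of_finite_of_not_finite {K A M : Type*} [CommRing K] [IsNoetherianRing K]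
    [CommRing A] [IsDomain A] [Algebra K A] [AddCommGroup M] [Module K M] [Module A M]
    [IsScalarTower K A M] [Module.Finite K M] (hA : ¬ Module.Finite K A) :
    Module.IsTorsion A M := by
  intro m
  have hker : LinearMap.ker ((LinearMap.toSpanSingleton A M m).restrictScalars K) ≠ ⊥ :=
    fun h => hA (.of_injective _ (LinearMap.ker_eq_bot.mp h))
  obtain ⟨a, ha, ha0⟩ := (Submodule.ne_bot_iff _).mp hker
  exact ⟨⟨a, mem_nonZeroDivisors_of_ne_zero ha0⟩, ha⟩

theorem Module.IsTorsion.exists_isTorsionBy {A M : Type*} [CommRing A] [AddCommGroup M]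
    [Module A M] [Module.Finite A M] (hM : Module.IsTorsion A M) :
    ∃ a ∈ nonZeroDivisors A, Module.IsTorsionBy A M a := by
  obtain ⟨a, ha, ha'⟩ := Submodule.annihilator_top_inter_nonZeroDivisors hM
  exact ⟨a, ha', fun m => Submodule.mem_annihilator.mp ha m Submodule.mem_top⟩

theorem Module.IsTorsionBySet.finite_of_finite_quotient {K A M : Type*} [CommSemiring K] [Ring A]
    [Algebra K A] [AddCommGroup M] [Module K M] [Module A M] [IsScalarTower K A M]
    [Module.Finite A M] {I : Ideal A} [I.IsTwoSided] [Module.Finite K (A ⧸ I)]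
    (hM : Module.IsTorsionBySet A M I) : Module.Finite K M :=
  letI := hM.module
  haveI := hM.isScalarTower (S := A)
  haveI := hM.isScalarTower (S := K)
  haveI := Module.Finite.of_restrictScalars_finite A (A ⧸ I) M
  .trans (A ⧸ I) M

theorem Polynomial.finite_quotient_of_ne_zero {K : Type*} [Field K] {p : K[X]} (hp : p ≠ 0) :
    Module.Finite K (K[X] ⧸ Ideal.span {p}) :=
  (AdjoinRoot.powerBasis hp).finite

theorem torsion_iff_finiteDimensional
    (R : Type*) [Field R]
    (M : Type*) [AddCommGroup M] [Module R M] [Module (Polynomial R) M]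
    [IsScalarTower R (Polynomial R) M]
    [Module.Finite (Polynomial R) M] :
    Module.IsTorsion (Polynomial R) M ↔ FiniteDimensional R M := by
  refine ⟨fun hM => ?_, fun _ => Module.isTorsion_of_finite_of_not_finite Polynomial.not_finite⟩
  obtain ⟨p, hp, hMp⟩ := hM.exists_isTorsionBy
  have := finite_quotient_of_ne_zero (nonZeroDivisors.ne_zero hp)
  exact Module.IsTorsionBySet.finite_of_finite_quotient
    ((Module.isTorsionBySet_span_singleton_iff p).mpr hMp)
end

section
/- For the module Λ₁ over ℝ[d/dt] generated by x₁,…,x_n,u subject to the relations ẋ₁ = x₂, …, ẋ_{n−1} = x_n, ẋ_n = −a₀x₁ − ⋯ − a_{n−1}x_n + b u with b ≠ 0, the element x₁ is a basis of Λ₁, i.e., Λ₁ is free of rank 1 generated by x₁. -/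
open scoped BigOperators

/-- The `i`-th standard generator of the free `ℝ[X]`-module `Fin (n+1) → ℝ[X]`. -/
noncomputable def gen (n : ℕ) (i : Fin (n + 1)) : Fin (n + 1) → Polynomial ℝ :=
  Pi.single i 1

/-- The relation submodule of the controllable canonical form: in the free
`ℝ[X]`-module on generators `x₁, …, x_n, u` (indices `0, …, n-1` for the `x`'s and
`n` for `u`), the relations are `X • x_i - x_{i+1}` for `i < n - 1` and
`X • x_n + ∑ aᵢ x_{i+1} - b • u`. Here `X` plays the role of `d/dt`. -/
noncomputable def canonicalRelations (n : ℕ) (hn : 0 < n) (a : Fin n → ℝ) (b : ℝ) :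
    Submodule (Polynomial ℝ) (Fin (n + 1) → Polynomial ℝ) :=
  Submodule.span (Polynomial ℝ)
    ({ r | ∃ (i : ℕ) (h : i + 1 < n),
        r = (Polynomial.X : Polynomial ℝ) • gen n ⟨i, Nat.lt_succ_of_lt (Nat.lt_of_succ_lt h)⟩
            - gen n ⟨i + 1, Nat.lt_succ_of_lt h⟩ } ∪
      { (Polynomial.X : Polynomial ℝ) • gen n ⟨n - 1, Nat.lt_succ_of_lt (Nat.sub_lt hn one_pos)⟩
          + (∑ j : Fin n, Polynomial.C (a j) • gen n (Fin.castSucc j))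
          - Polynomial.C b • gen n (Fin.last n) })

/-! The map `φ` sending each generator to the polynomial in `d/dt` that expresses it through `x₁`
(`x_{i+1} ↦ X ^ i`, `u ↦ b⁻¹ (X ^ n + ∑ aⱼ X ^ j)`) kills the relations, so it factors through
`Λ₁`. Conversely every generator `g` is congruent to `φ g • x₁` modulo the relations: for the
`x`'s by walking along the chain `ẋᵢ = x_{i+1}`, for `u` by solving the last relation, which needs
`b ≠ 0`. Hence the relations span exactly `ker φ`, and `φ` induces `Λ₁ ≃ ℝ[X]` with `x₁ ↦ 1`. -/

namespace Submodule

variable {R M : Type*} [CommRing R] [AddCommGroup M] [Module R M]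
  {K : Submodule R M} {φ : M →ₗ[R] R} {m₀ : M}

theorem sub_smul_mem_of_basis {ι : Type*} (v : Module.Basis ι R M)
    (hv : ∀ i, v i - φ (v i) • m₀ ∈ K) (x : M) : x - φ x • m₀ ∈ K := by
  have : K.mkQ ∘ₗ (LinearMap.id - φ.smulRight m₀) = 0 :=
    v.ext fun i => (Quotient.mk_eq_zero K).mpr (hv i)
  exact (Quotient.mk_eq_zero K).mp (LinearMap.congr_fun this x)

theorem eq_ker_of_sub_smul_mem (hK : K ≤ LinearMap.ker φ) (h : ∀ x, x - φ x • m₀ ∈ K) :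
    K = LinearMap.ker φ :=
  le_antisymm hK fun x hx => by simpa [LinearMap.mem_ker.mp hx] using h x

theorem exists_quotient_linearEquiv_mk_eq_one (hK : K ≤ LinearMap.ker φ) (hm₀ : φ m₀ = 1)
    (h : ∀ x, x - φ x • m₀ ∈ K) : ∃ e : (M ⧸ K) ≃ₗ[R] R, e (Quotient.mk m₀) = 1 := by
  have hφ : Function.Surjective φ := fun r => ⟨r • m₀, by simp [hm₀]⟩
  exact ⟨(quotEquivOfEq _ _ (eq_ker_of_sub_smul_mem hK h)).trans (φ.quotKerEquivOfSurjective hφ),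
    by simpa using hm₀⟩

end Submodule

open Polynomial

noncomputable def flatOutputCoeff (n : ℕ) (a : Fin n → ℝ) (b : ℝ) (i : Fin (n + 1)) : ℝ[X] :=
  if (i : ℕ) < n then X ^ (i : ℕ) else C b⁻¹ * (X ^ n + ∑ j : Fin n, C (a j) * X ^ (j : ℕ))

noncomputable def flatOutputMap (n : ℕ) (a : Fin n → ℝ) (b : ℝ) :
    (Fin (n + 1) → ℝ[X]) →ₗ[ℝ[X]] ℝ[X] :=
  Fintype.linearCombination ℝ[X] (flatOutputCoeff n a b)

section

variable {n : ℕ} (a : Fin n → ℝ) {b : ℝ}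

theorem flatOutputCoeff_of_lt {i : ℕ} (h : i < n) :
    flatOutputCoeff n a b ⟨i, Nat.lt_succ_of_lt h⟩ = X ^ i :=
  if_pos h

theorem flatOutputCoeff_last :
    flatOutputCoeff n a b (Fin.last n) = C b⁻¹ * (X ^ n + ∑ j : Fin n, C (a j) * X ^ (j : ℕ)) :=
  if_neg (lt_irrefl n)

theorem flatOutputMap_gen (i : Fin (n + 1)) :
    flatOutputMap n a b (gen n i) = flatOutputCoeff n a b i := by
  classical
  simp [flatOutputMap, gen, Fintype.linearCombination_apply_single]

theorem flatOutputMap_gen_zero (hn : 0 < n) :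
    flatOutputMap n a b (gen n ⟨0, n.succ_pos⟩) = 1 := by
  rw [flatOutputMap_gen, flatOutputCoeff_of_lt a hn, pow_zero]

theorem canonicalRelations_le_ker_flatOutputMap (hn : 0 < n) (hb : b ≠ 0) :
    canonicalRelations n hn a b ≤ LinearMap.ker (flatOutputMap n a b) := by
  rw [canonicalRelations, Submodule.span_le]
  rintro r (⟨i, h, rfl⟩ | rfl)
  · simp [flatOutputMap_gen, flatOutputCoeff_of_lt a h,
      flatOutputCoeff_of_lt a (Nat.lt_of_succ_lt h), pow_succ']
  · have hcast : ∀ j : Fin n, flatOutputCoeff n a b j.castSucc = X ^ (j : ℕ) :=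
      fun j => flatOutputCoeff_of_lt a j.isLt
    simp only [SetLike.mem_coe, LinearMap.mem_ker, map_sub, map_add, map_smul, map_sum,
      flatOutputMap_gen, hcast, flatOutputCoeff_last, flatOutputCoeff_of_lt a (n.sub_one_lt hn.ne'),
      smul_eq_mul, ← mul_assoc, ← C_mul, mul_inv_cancel₀ hb, C_1, one_mul]
    rw [← pow_succ', Nat.sub_one_add_one hn.ne', sub_self]

theorem gen_sub_flatOutputMap_smul_mem (hn : 0 < n) (hb : b ≠ 0) (i : Fin (n + 1)) :
    gen n i - flatOutputMap n a b (gen n i) • gen n ⟨0, n.succ_pos⟩ ∈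
      canonicalRelations n hn a b := by
  set K := canonicalRelations n hn a b
  -- `ψ x = x - φ x • x₁` fixes every relation, so `ψ` of a relation expresses `ψ` of its last
  -- generator through `ψ` of the earlier ones.
  set ψ := LinearMap.id - (flatOutputMap n a b).smulRight (gen n ⟨0, n.succ_pos⟩)
  change ψ (gen n i) ∈ K
  have hψ : ∀ r ∈ K, ψ r ∈ K := fun r hr => by
    have hφr : flatOutputMap n a b r = 0 := canonicalRelations_le_ker_flatOutputMap a hn hb hr
    simpa [ψ, hφr] using hr
  have hx : ∀ (i : ℕ) (h : i < n), ψ (gen n ⟨i, Nat.lt_succ_of_lt h⟩) ∈ K := by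
    intro i
    induction i with
    | zero =>
      intro _
      simp only [ψ, LinearMap.sub_apply, LinearMap.id_apply, LinearMap.smulRight_apply,
        flatOutputMap_gen_zero a hn, one_smul, sub_self, K.zero_mem]
    | succ i ih =>
      intro h
      have := hψ _ (Submodule.subset_span (Or.inl ⟨i, h, rfl⟩))
      rw [map_sub, map_smul] at this
      exact (K.sub_mem_iff_right (K.smul_mem X (ih (Nat.lt_of_succ_lt h)))).mp this
  have hx_castSucc : ∀ j : Fin n, ψ (gen n j.castSucc) ∈ K := fun ⟨j, hj⟩ => by
    simpa only [Fin.castSucc_mk] using hx j hj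
  have hu : ψ (gen n (Fin.last n)) ∈ K := by
    have := hψ _ (Submodule.subset_span (Or.inr rfl))
    simp only [map_sub, map_add, map_smul, map_sum] at this
    have hb' : C b • ψ (gen n (Fin.last n)) ∈ K :=
      (K.sub_mem_iff_right (K.add_mem (K.smul_mem _ (hx _ (n.sub_one_lt hn.ne')))
        (K.sum_mem fun j _ => K.smul_mem _ (hx_castSucc j)))).mp this
    simpa [smul_smul, ← C_mul, inv_mul_cancel₀ hb] using K.smul_mem (C b⁻¹) hb'
  rcases Fin.eq_castSucc_or_eq_last i with ⟨j, rfl⟩ | rfl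
  · exact hx_castSucc j
  · exact hu

end

theorem canonical_form_module_free_rank_one_basis_x1
    (n : ℕ) (hn : 0 < n) (a : Fin n → ℝ) (b : ℝ) (hb : b ≠ 0) :
    ∃ e : ((Fin (n + 1) → Polynomial ℝ) ⧸ canonicalRelations n hn a b)
          ≃ₗ[Polynomial ℝ] Polynomial ℝ,
      e (Submodule.Quotient.mk (gen n ⟨0, Nat.succ_pos n⟩)) = 1 :=
  Submodule.exists_quotient_linearEquiv_mk_eq_one
    (canonicalRelations_le_ker_flatOutputMap a hn hb) (flatOutputMap_gen_zero a hn)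
    (Submodule.sub_smul_mem_of_basis (Pi.basisFun _ _) fun i => by
      simpa only [Pi.basisFun_apply, gen] using gen_sub_flatOutputMap_smul_mem a hn hb i)
end
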